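/- (Corollary: the norm splits over the even/odd decomposition.) Let x₊ ∈ evenOdd Q 0 and x₋ ∈ evenOdd Q 1 and x = x₊ + x₋. Then N(x) = N(x₊) + N(x₋); concretely, x • x* = x₊ * reverse(x₊) + x₋ * reverse(x₋). -/

import Mathlib

open CliffordAlgebra

/-- The diagonal quadratic form on `ℝ³` with weights `l`. -/
noncomputable def Qf (l : Fin 3 → ℝ) : QuadraticForm ℝ (Fin 3 → ℝ) :=
  QuadraticMap.weightedSumSquares ℝ l

/-- The octonionic product `x • y` of `x = x₊ + x₋` and `y = y₊ + y₋`, expressed in terms of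
the even/odd parts: `x • y = x₊y₊ - (reverse y₋)x₋ + y₋x₊ + x₋(reverse y₊)`. -/
noncomputable def octMul {R M : Type*} [CommRing R] [AddCommGroup M] [Module R M]
    (Q : QuadraticForm R M) (xp xm yp ym : CliffordAlgebra Q) : CliffordAlgebra Q :=
  xp * yp - reverse ym * xm + ym * xp + xm * reverse yp

/-- The octonionic norm `N(x) = x • x*`, where `x* = reverse x₊ - x₋` is the full grade
inversion of `x = x₊ + x₋`. -/
noncomputable def octNorm {R M : Type*} [CommRing R] [AddCommGroup M] [Module R M]
    (Q : QuadraticForm R M) (xp xm : CliffordAlgebra Q) : CliffordAlgebra Q :=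
  octMul Q xp xm (reverse xp) (-xm)

/-!
Writing `†` for reversion, `N(x) = x₊ x₊† + x₋† x₋` in any Clifford algebra (the cross terms
`x₋ x₊` cancel), so both claims reduce to `x₋† x₋ = x₋ x₋†` for odd `x₋`. In dimension three the
odd part is spanned by the vectors and the pseudoscalar `t = e₀e₁e₂`, which commutes with every
vector and satisfies `t† = -t`. Hence `x₋ = v + t'` with `t'` a multiple of `t`, and `x₋† = v - t'`
commutes with `v + t'`.
-/

open QuadraticMap

theorem octNorm_eq_mul_reverse_add_reverse_mul {R M : Type*} [CommRing R] [AddCommGroup M]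
    [Module R M] (Q : QuadraticForm R M) (xp xm : CliffordAlgebra Q) :
    octNorm Q xp xm = xp * reverse xp + reverse xm * xm := by
  simp only [octNorm, octMul, map_neg, reverse_reverse, neg_mul, sub_neg_eq_add]
  abel

section Basis

variable {R κ : Type*} [CommRing R] [Fintype κ] [DecidableEq κ] (w : κ → R)

theorem isOrtho_weightedSumSquares_single {i j : κ} (h : i ≠ j) :
    (weightedSumSquares R w).IsOrtho (Pi.single i 1) (Pi.single j 1) := by
  rw [isOrtho_def]
  simp only [weightedSumSquares_apply, Pi.add_apply, ← Finset.sum_add_distrib, ← smul_add]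
  refine Finset.sum_congr rfl fun k _ => ?_
  by_cases hi : k = i
  · subst hi; simp [h]
  · by_cases hj : k = j
    · subst hj; simp [hi]
    · simp [hi, hj]

noncomputable def basisVec (i : κ) : CliffordAlgebra (weightedSumSquares R w) :=
  ι _ (Pi.single i 1)

theorem basisVec_mul_self (i : κ) : basisVec w i * basisVec w i = algebraMap R _ (w i) := by
  simp [basisVec, ι_sq_scalar, Pi.single_apply]

theorem basisVec_mul_basisVec_mul_self (i : κ) (x : CliffordAlgebra (weightedSumSquares R w)) :
    basisVec w i * (basisVec w i * x) = w i • x := by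
  rw [← mul_assoc, basisVec_mul_self, Algebra.smul_def]

theorem reverse_basisVec (i : κ) : reverse (basisVec w i) = basisVec w i :=
  reverse_ι _

theorem ι_eq_sum_smul_basisVec (v : κ → R) :
    ι (weightedSumSquares R w) v = ∑ i, v i • basisVec w i := by
  conv_lhs => rw [← Finset.univ_sum_single v]
  simp only [map_sum, basisVec, ← map_smul, ← Pi.single_smul, smul_eq_mul, mul_one]

end Basis

section Ordered

variable {R : Type*} [CommRing R] {n : ℕ} (w : Fin n → R)

theorem basisVec_mul_basisVec_of_lt {i j : Fin n} (h : j < i) :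
    basisVec w i * basisVec w j = -(basisVec w j * basisVec w i) :=
  ι_mul_ι_comm_of_isOrtho (isOrtho_weightedSumSquares_single w h.ne')

theorem basisVec_mul_basisVec_mul_of_lt {i j : Fin n} (h : j < i)
    (x : CliffordAlgebra (weightedSumSquares R w)) :
    basisVec w i * (basisVec w j * x) = -(basisVec w j * (basisVec w i * x)) :=
  ι_mul_ι_mul_of_isOrtho x (isOrtho_weightedSumSquares_single w h.ne')

end Ordered

section Dim3

variable {R : Type*} [CommRing R] (w : Fin 3 → R)

noncomputable def pseudoscalar : CliffordAlgebra (weightedSumSquares R w) :=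
  basisVec w 0 * (basisVec w 1 * basisVec w 2)

def oddSpan : Submodule R (CliffordAlgebra (weightedSumSquares R w)) :=
  LinearMap.range (ι _) ⊔ R ∙ pseudoscalar w

theorem basisVec_mem_oddSpan (i : Fin 3) : basisVec w i ∈ oddSpan w :=
  Submodule.mem_sup_left ⟨_, rfl⟩

theorem pseudoscalar_mem_oddSpan : pseudoscalar w ∈ oddSpan w :=
  Submodule.mem_sup_right (Submodule.mem_span_singleton_self _)

theorem basisVec_mul_basisVec_mul_basisVec_mem_oddSpan (i j k : Fin 3) :
    basisVec w i * basisVec w j * basisVec w k ∈ oddSpan w := by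
  fin_cases i <;> fin_cases j <;> fin_cases k <;>
  simp only [Fin.zero_eta, Fin.mk_one, Fin.reduceFinMk, Fin.reduceLT, mul_assoc,
    basisVec_mul_basisVec_mul_of_lt w, basisVec_mul_basisVec_of_lt w,
    basisVec_mul_basisVec_mul_self, basisVec_mul_self, Algebra.algebraMap_eq_smul_one,
    mul_smul_comm, smul_mul_assoc, mul_one, one_mul, mul_neg, neg_mul, neg_neg] <;>
  solve_by_elim [Submodule.neg_mem, Submodule.smul_mem, basisVec_mem_oddSpan,
    pseudoscalar_mem_oddSpan]

theorem basisVec_mul_basisVec_mul_pseudoscalar_mem_oddSpan (i j : Fin 3) :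
    basisVec w i * basisVec w j * pseudoscalar w ∈ oddSpan w := by
  fin_cases i <;> fin_cases j <;>
  simp only [pseudoscalar, Fin.zero_eta, Fin.mk_one, Fin.reduceFinMk, Fin.reduceLT, mul_assoc,
    basisVec_mul_basisVec_mul_of_lt w, basisVec_mul_basisVec_of_lt w,
    basisVec_mul_basisVec_mul_self, basisVec_mul_self, Algebra.algebraMap_eq_smul_one,
    mul_smul_comm, smul_mul_assoc, mul_one, one_mul, mul_neg, neg_mul, neg_neg, smul_neg,
    smul_smul] <;>
  solve_by_elim [Submodule.neg_mem, Submodule.smul_mem, basisVec_mem_oddSpan,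
    pseudoscalar_mem_oddSpan]

theorem commute_basisVec_pseudoscalar (i : Fin 3) : Commute (basisVec w i) (pseudoscalar w) := by
  fin_cases i <;>
  simp only [Commute, SemiconjBy, pseudoscalar, Fin.zero_eta, Fin.mk_one, Fin.reduceFinMk,
    Fin.reduceLT, mul_assoc, basisVec_mul_basisVec_mul_of_lt w, basisVec_mul_basisVec_of_lt w,
    basisVec_mul_basisVec_mul_self, basisVec_mul_self, Algebra.algebraMap_eq_smul_one,
    mul_smul_comm, mul_one, mul_neg, neg_neg]

theorem commute_ι_pseudoscalar (v : Fin 3 → R) : Commute (ι _ v) (pseudoscalar w) := by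
  rw [ι_eq_sum_smul_basisVec w]
  exact Commute.sum_left _ _ _ fun i _ => (commute_basisVec_pseudoscalar w i).smul_left _

theorem reverse_pseudoscalar : reverse (pseudoscalar w) = -pseudoscalar w := by
  simp only [pseudoscalar, reverse.map_mul, reverse_basisVec, mul_assoc, neg_mul, Fin.reduceLT,
    basisVec_mul_basisVec_mul_of_lt w, basisVec_mul_basisVec_of_lt w, mul_neg, neg_neg]

theorem ι_mul_ι_mul_ι_mem_oddSpan (a b c : Fin 3 → R) :
    ι _ a * ι _ b * ι _ c ∈ oddSpan w := by
  simp only [ι_eq_sum_smul_basisVec w, Finset.sum_mul, Finset.mul_sum, smul_mul_assoc,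
    mul_smul_comm, Finset.smul_sum, smul_smul]
  exact Submodule.sum_mem _ fun _ _ => Submodule.sum_mem _ fun _ _ => Submodule.sum_mem _
    fun _ _ => Submodule.smul_mem _ _ (basisVec_mul_basisVec_mul_basisVec_mem_oddSpan w _ _ _)

theorem ι_mul_ι_mul_pseudoscalar_mem_oddSpan (a b : Fin 3 → R) :
    ι _ a * ι _ b * pseudoscalar w ∈ oddSpan w := by
  simp only [ι_eq_sum_smul_basisVec w, Finset.sum_mul, Finset.mul_sum, smul_mul_assoc,
    mul_smul_comm, Finset.smul_sum, smul_smul]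
  exact Submodule.sum_mem _ fun _ _ => Submodule.sum_mem _ fun _ _ =>
    Submodule.smul_mem _ _ (basisVec_mul_basisVec_mul_pseudoscalar_mem_oddSpan w _ _)

theorem ι_mul_ι_mul_mem_oddSpan (a b : Fin 3 → R) {x : CliffordAlgebra (weightedSumSquares R w)}
    (hx : x ∈ oddSpan w) : ι _ a * ι _ b * x ∈ oddSpan w := by
  obtain ⟨_, ⟨v, rfl⟩, _, hs, rfl⟩ := Submodule.mem_sup.mp hx
  obtain ⟨r, rfl⟩ := Submodule.mem_span_singleton.mp hs
  rw [mul_add, mul_smul_comm]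
  exact add_mem (ι_mul_ι_mul_ι_mem_oddSpan w a b v)
    (Submodule.smul_mem _ _ (ι_mul_ι_mul_pseudoscalar_mem_oddSpan w a b))

theorem evenOdd_one_le_oddSpan : evenOdd (weightedSumSquares R w) 1 ≤ oddSpan w := fun x hx =>
  odd_induction (Q := weightedSumSquares R w) (P := fun y _ => y ∈ oddSpan w)
    (fun v => Submodule.mem_sup_left (LinearMap.mem_range_self _ v)) (fun _ _ _ _ => add_mem)
    (fun a b _ _ => ι_mul_ι_mul_mem_oddSpan w a b) x hx

theorem commute_reverse_self_of_mem_oddSpan {x : CliffordAlgebra (weightedSumSquares R w)}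
    (hx : x ∈ oddSpan w) : Commute (reverse x) x := by
  obtain ⟨_, ⟨v, rfl⟩, _, hs, rfl⟩ := Submodule.mem_sup.mp hx
  obtain ⟨r, rfl⟩ := Submodule.mem_span_singleton.mp hs
  have hc : Commute (ι _ v) (r • pseudoscalar w) := (commute_ι_pseudoscalar w v).smul_right r
  rw [map_add, reverse_ι, map_smul, reverse_pseudoscalar, smul_neg, ← sub_eq_add_neg]
  exact ((Commute.refl _).add_right hc).sub_left (hc.symm.add_right (Commute.refl _))

theorem commute_reverse_self_of_mem_evenOdd_one {x : CliffordAlgebra (weightedSumSquares R w)}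
    (hx : x ∈ evenOdd _ 1) : Commute (reverse x) x :=
  commute_reverse_self_of_mem_oddSpan w (evenOdd_one_le_oddSpan w hx)

end Dim3

theorem octNorm_even_add_odd_general (l : Fin 3 → ℝ)
    (xp xm : CliffordAlgebra (Qf l))
    (hxm : xm ∈ evenOdd (Qf l) 1) :
    octNorm (Qf l) xp xm = octNorm (Qf l) xp 0 + octNorm (Qf l) 0 xm ∧
    octNorm (Qf l) xp xm = xp * reverse xp + xm * reverse xm := by
  have hcomm : reverse xm * xm = xm * reverse xm :=
    (commute_reverse_self_of_mem_evenOdd_one l hxm).eq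
  simp only [octNorm_eq_mul_reverse_add_reverse_mul, map_zero, mul_zero, add_zero, zero_add,
    hcomm, and_self]

/-- (Corollary: the norm splits over the even/odd decomposition.) For `x = x₊ + x₋` with
`x₊` even and `x₋` odd, `N(x) = N(x₊) + N(x₋)`; concretely,
`x • x* = x₊ * reverse x₊ + x₋ * reverse x₋`. -/
theorem octNorm_even_add_odd (l : Fin 3 → ℝ) (hl : ∀ i, l i = 1 ∨ l i = -1)
    (xp xm : CliffordAlgebra (Qf l))
    (hxp : xp ∈ evenOdd (Qf l) 0) (hxm : xm ∈ evenOdd (Qf l) 1) :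
    octNorm (Qf l) xp xm = octNorm (Qf l) xp 0 + octNorm (Qf l) 0 xm ∧
    octNorm (Qf l) xp xm = xp * reverse xp + xm * reverse xm :=
  octNorm_even_add_odd_general l xp xm hxm
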